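/- Let G be a connected finite simple graph with at least 2 vertices, let r be a removable vertex of G (i.e., σ(G∖r) > σ(G)), and let C be a component of G∖r of maximum density. Then σ(C) > σ(G), and the induced subgraph G[V(C) ∪ {r}] satisfies σ(G[V(C) ∪ {r}]) > σ(G)/2. -/
import Mathlib


open Finset

variable {V : Type*}

private def eSet (G : SimpleGraph V) (A : Set V) : Set (Sym2 V) :=
  {e | e ∈ G.edgeSet ∧ ∀ v ∈ e, v ∈ A}

private lemma induce_edge_ncard (G : SimpleGraph V) (A : Set V) :
    (G.induce A).edgeSet.ncard = (eSet G A).ncard := by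
  rw [← Set.ncard_image_of_injective (G.induce A).edgeSet
    (Sym2.map.injective (Subtype.val_injective : Function.Injective (Subtype.val : A → V)))]
  congr 1
  apply Set.Subset.antisymm
  · rintro e ⟨e', he', rfl⟩
    induction e' with
    | _ x y =>
      simp only [SimpleGraph.mem_edgeSet, SimpleGraph.comap_adj] at he'
      refine ⟨by simpa using he', ?_⟩
      intro v hv
      rw [Sym2.map_pair_eq, Sym2.mem_iff] at hv
      rcases hv with rfl | rfl
      · exact x.2
      · exact y.2
  · rintro e ⟨hab, hmem⟩
    induction e with
    | _ a b =>
      have ha : a ∈ A := hmem a (Sym2.mem_mk_left a b)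
      have hb : b ∈ A := hmem b (Sym2.mem_mk_right a b)
      refine ⟨s(⟨a, ha⟩, ⟨b, hb⟩), ?_, ?_⟩
      · simpa using hab
      · simp

private lemma eSet_mono (G : SimpleGraph V) {A B : Set V} (h : A ⊆ B) :
    eSet G A ⊆ eSet G B := fun e he => ⟨he.1, fun v hv => h (he.2 v hv)⟩

private lemma my_ncard_biUnion {α ι : Type*} (s : Finset ι) (f : ι → Set α)
    (hfin : ∀ i, (f i).Finite)
    (hdisj : ∀ i ∈ s, ∀ j ∈ s, i ≠ j → Disjoint (f i) (f j)) :
    (⋃ i ∈ s, f i).ncard = ∑ i ∈ s, (f i).ncard := by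
  classical
  induction s using Finset.induction_on with
  | empty => simp
  | @insert a s ha ih =>
    have hun : (⋃ x ∈ s, f x).Finite :=
      Set.Finite.biUnion s.finite_toSet (fun i _ => hfin i)
    have hdis : Disjoint (f a) (⋃ x ∈ s, f x) := by
      simp only [Set.disjoint_iUnion_right]
      intro i hi
      exact hdisj a (Finset.mem_insert_self a s) i (Finset.mem_insert_of_mem hi)
        (fun h => ha (h ▸ hi))
    rw [Finset.set_biUnion_insert, Finset.sum_insert ha,
      Set.ncard_union_eq hdis (hfin a) hun,
      ih (fun i hi j hj hij => hdisj i (Finset.mem_insert_of_mem hi) j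
        (Finset.mem_insert_of_mem hj) hij)]

noncomputable def graphDensity [Fintype V] (G : SimpleGraph V) : ℝ :=
  2 * G.edgeSet.ncard / Fintype.card V

noncomputable def setDensity (G : SimpleGraph V) (A : Set V) : ℝ :=
  2 * (G.induce A).edgeSet.ncard / A.ncard

noncomputable def indDensity (G : SimpleGraph V) (S : Finset V) : ℝ :=
  2 * (G.induce (S : Set V)).edgeSet.ncard / S.card

noncomputable def subDensity {G : SimpleGraph V} (H : G.Subgraph) : ℝ :=
  2 * H.edgeSet.ncard / H.verts.ncard

noncomputable def maxKDensity (G : SimpleGraph V) (k : ℕ) : ℝ :=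
  sSup {x : ℝ | ∃ H : G.Subgraph, H.verts.ncard = k ∧ x = subDensity H}

noncomputable def maxConnKDensity (G : SimpleGraph V) (k : ℕ) : ℝ :=
  sSup {x : ℝ | ∃ H : G.Subgraph, H.verts.ncard = k ∧ H.Connected ∧ x = subDensity H}

noncomputable def maxDensity (G : SimpleGraph V) : ℝ :=
  sSup {x : ℝ | ∃ H : G.Subgraph, H.verts.Nonempty ∧ x = subDensity H}

def cutCount (G : SimpleGraph V) [DecidableRel G.Adj] (S T : Finset V) : ℕ :=
  ((S ×ˢ T).filter fun p => G.Adj p.1 p.2).card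

def IsCompOf (G : SimpleGraph V) (A W : Set V) : Prop :=
  A.Nonempty ∧ A ⊆ W ∧ (G.induce A).Connected ∧
    ∀ B : Set V, A ⊆ B → B ⊆ W → (G.induce B).Connected → B = A

private lemma comp_isCompOf (G : SimpleGraph V) (W : Set V)
    (c : (G.induce W).ConnectedComponent) :
    IsCompOf G (Subtype.val '' c.supp) W := by
  classical
  obtain ⟨v, hv0⟩ := Quot.exists_rep c
  have hv : (G.induce W).connectedComponentMk v = c := hv0
  have hvsupp : v ∈ c.supp := by
    rw [SimpleGraph.ConnectedComponent.mem_supp_iff, hv]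
  set S : Set V := Subtype.val '' c.supp with hS
  have hSW : S ⊆ W := by rintro x ⟨y, _, rfl⟩; exact y.2
  have hvS : (v : V) ∈ S := ⟨v, hvsupp, rfl⟩
  refine ⟨⟨v, hvS⟩, hSW, ?_, ?_⟩
  · apply SimpleGraph.induce_connected_of_patches (v : V) hvS
    rintro w ⟨y, hy, rfl⟩
    rw [SimpleGraph.ConnectedComponent.mem_supp_iff] at hy
    have hreach : (G.induce W).Reachable v y := by
      rw [← SimpleGraph.ConnectedComponent.eq, hy, ← hv]
    obtain ⟨p⟩ := hreach
    let q := p.map (SimpleGraph.Embedding.induce W).toHom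
    have hsupp : {x | x ∈ q.support} ⊆ S := by
      intro x hx
      simp only [q, SimpleGraph.Walk.support_map, List.mem_map, Set.mem_setOf_eq] at hx
      obtain ⟨z, hz, rfl⟩ := hx
      have : (G.induce W).Reachable v z := (p.takeUntil z hz).reachable
      exact ⟨z, by rw [SimpleGraph.ConnectedComponent.mem_supp_iff, ← hv,
        SimpleGraph.ConnectedComponent.eq]; exact this.symm, rfl⟩
    refine ⟨{x | x ∈ q.support}, hsupp, ?_, ?_, ?_⟩
    · exact q.start_mem_support
    · exact q.end_mem_support
    · exact (q.connected_induce_support).preconnected _ _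
  · intro B hSB hBW hBconn
    refine Set.Subset.antisymm (fun b hb => ?_) hSB
    have hvB : (v : V) ∈ B := hSB hvS
    have hreach : (G.induce B).Reachable ⟨b, hb⟩ ⟨(v : V), hvB⟩ :=
      hBconn.preconnected _ _
    have hreach' : (G.induce W).Reachable ⟨b, hBW hb⟩ ⟨(v : V), hSW hvS⟩ :=
      hreach.map (G.induceHomOfLE hBW).toHom
    refine ⟨⟨b, hBW hb⟩, ?_, rfl⟩
    rw [SimpleGraph.ConnectedComponent.mem_supp_iff, ← hv, SimpleGraph.ConnectedComponent.eq]
    have : (⟨(v : V), hSW hvS⟩ : W) = v := rfl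
    exact this ▸ hreach'

noncomputable def subWDensity {G : SimpleGraph V} (w : Sym2 V → ℝ) (H : G.Subgraph) : ℝ :=
  2 * (∑ᶠ e ∈ H.edgeSet, w e) / H.verts.ncard

noncomputable def indWDensity (G : SimpleGraph V) (w : Sym2 V → ℝ) (S : Finset V) : ℝ :=
  2 * (∑ᶠ e ∈ {e : Sym2 V | e ∈ G.edgeSet ∧ ∀ v ∈ e, v ∈ S}, w e) / S.card

noncomputable def maxKWDensity (G : SimpleGraph V) (w : Sym2 V → ℝ) (k : ℕ) : ℝ :=
  sSup {x : ℝ | ∃ H : G.Subgraph, H.verts.ncard = k ∧ x = subWDensity w H}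

noncomputable def maxConnKWDensity (G : SimpleGraph V) (w : Sym2 V → ℝ) (k : ℕ) : ℝ :=
  sSup {x : ℝ | ∃ H : G.Subgraph, H.verts.ncard = k ∧ H.Connected ∧ x = subWDensity w H}

/-- if `r` is removable and `C` is a densest component of `G∖r`, then
`σ(C) > σ(G)` and `σ(G[V(C) ∪ {r}]) > σ(G)/2`. -/
theorem stmt18 [Fintype V] (G : SimpleGraph V) (hG : G.Connected)
    (hV : 2 ≤ Fintype.card V) (r : V)
    (hrem : setDensity G {r}ᶜ > graphDensity G)
    (C : Set V) (hC : IsCompOf G C {r}ᶜ)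
    (hCmax : ∀ C' : Set V, IsCompOf G C' {r}ᶜ → setDensity G C' ≤ setDensity G C) :
    setDensity G C > graphDensity G ∧
      setDensity G (C ∪ {r}) > graphDensity G / 2 := by
  classical
  set W : Set V := {r}ᶜ with hWdef
  set H := G.induce W with hHdef
  haveI : Finite H.ConnectedComponent :=
    Finite.of_surjective H.connectedComponentMk (fun c => Quot.exists_rep c)
  letI : Fintype H.ConnectedComponent := Fintype.ofFinite _
  set S : H.ConnectedComponent → Set V := fun c => Subtype.val '' c.supp with hSdef
  have hsd : ∀ A : Set V, setDensity G A = 2 * ((eSet G A).ncard : ℝ) / A.ncard := by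
    intro A; rw [setDensity, induce_edge_ncard]
  have hcomp : ∀ c, IsCompOf G (S c) W := fun c => comp_isCompOf G W c
  have hSpos : ∀ c, 0 < ((S c).ncard : ℝ) := by
    intro c
    exact_mod_cast (Set.ncard_pos (Set.toFinite (S c))).mpr (hcomp c).1
  have hdisjS : ∀ c d : H.ConnectedComponent, c ≠ d → Disjoint (S c) (S d) := by
    intro c d hcd
    rw [Set.disjoint_left]
    rintro x ⟨y, hy, rfl⟩ ⟨z, hz, hzy⟩
    have : z = y := Subtype.val_injective hzy
    subst this
    rw [SimpleGraph.ConnectedComponent.mem_supp_iff] at hy hz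
    exact hcd (hy ▸ hz ▸ rfl)
  have hUnion : (⋃ c ∈ Finset.univ, S c) = W := by
    apply Set.Subset.antisymm
    · intro x hx
      simp only [Set.mem_iUnion] at hx
      obtain ⟨c, _, hc⟩ := hx
      exact (hcomp c).2.1 hc
    · intro x hx
      simp only [Set.mem_iUnion]
      refine ⟨H.connectedComponentMk ⟨x, hx⟩, Finset.mem_univ _, ⟨x, hx⟩, ?_, rfl⟩
      rw [SimpleGraph.ConnectedComponent.mem_supp_iff]
  have hVsum : W.ncard = ∑ c, (S c).ncard := by
    have h := my_ncard_biUnion Finset.univ S (fun c => Set.toFinite _)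
      (fun c _ d _ hcd => hdisjS c d hcd)
    rw [hUnion] at h
    exact h
  have hEdge : (⋃ c ∈ Finset.univ, eSet G (S c)) = eSet G W := by
    apply Set.Subset.antisymm
    · intro e he
      simp only [Set.mem_iUnion] at he
      obtain ⟨c, _, hc⟩ := he
      exact eSet_mono G (hcomp c).2.1 hc
    · intro e he
      obtain ⟨hadj, hmem⟩ := he
      induction e with
      | _ a b =>
        have ha : a ∈ W := hmem a (Sym2.mem_mk_left a b)
        have hb : b ∈ W := hmem b (Sym2.mem_mk_right a b)
        have hab : G.Adj a b := hadj
        have hHadj : H.Adj ⟨a, ha⟩ ⟨b, hb⟩ := by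
          simp only [hHdef, SimpleGraph.comap_adj, Function.Embedding.coe_subtype]
          exact hab
        set c := H.connectedComponentMk ⟨a, ha⟩ with hc
        have hbc : H.connectedComponentMk ⟨b, hb⟩ = c :=
          (SimpleGraph.ConnectedComponent.connectedComponentMk_eq_of_adj hHadj).symm
        simp only [Set.mem_iUnion]
        refine ⟨c, Finset.mem_univ _, hab, ?_⟩
        intro v hv
        rw [Sym2.mem_iff] at hv
        rcases hv with rfl | rfl
        · exact ⟨⟨v, ha⟩, by rw [SimpleGraph.ConnectedComponent.mem_supp_iff], rfl⟩
        · exact ⟨⟨v, hb⟩, by rw [SimpleGraph.ConnectedComponent.mem_supp_iff]; exact hbc, rfl⟩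
  have hEsum : (eSet G W).ncard = ∑ c, (eSet G (S c)).ncard := by
    rw [← hEdge]
    refine my_ncard_biUnion Finset.univ _ (fun c => Set.toFinite _) ?_
    intro c _ d _ hcd
    rw [Set.disjoint_left]
    intro e hec hed
    induction e with
    | _ a b =>
      have ha : a ∈ S c := hec.2 a (Sym2.mem_mk_left a b)
      have ha' : a ∈ S d := hed.2 a (Sym2.mem_mk_left a b)
      exact Set.disjoint_left.mp (hdisjS c d hcd) ha ha'
  -- Goal 1
  have hWpos : 0 < (W.ncard : ℝ) := by
    have : W.Nonempty := hC.1.mono hC.2.1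
    exact_mod_cast (Set.ncard_pos (Set.toFinite W)).mpr this
  have key1 : ∀ c, 2 * ((eSet G (S c)).ncard : ℝ) ≤ setDensity G C * (S c).ncard := by
    intro c
    have h := hCmax (S c) (hcomp c)
    rw [hsd (S c)] at h
    exact (div_le_iff₀ (hSpos c)).mp h
  have key2 : 2 * ((eSet G W).ncard : ℝ) ≤ setDensity G C * W.ncard := by
    rw [hEsum, hVsum]
    push_cast
    rw [Finset.mul_sum, Finset.mul_sum]
    exact Finset.sum_le_sum (fun c _ => key1 c)
  have hWled : setDensity G W ≤ setDensity G C := by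
    rw [hsd W]
    exact (div_le_iff₀ hWpos).mpr key2
  have goal1 : setDensity G C > graphDensity G := lt_of_lt_of_le hrem hWled
  refine ⟨goal1, ?_⟩
  -- Goal 2
  have hrC : r ∉ C := fun h => (hC.2.1 h) rfl
  have hCne : C.Nonempty := hC.1
  have hn1 : 1 ≤ (C.ncard : ℝ) := by
    exact_mod_cast (Set.ncard_pos (Set.toFinite C)).mpr hCne
  have hnpos : 0 < (C.ncard : ℝ) := by linarith
  have hins : (C ∪ {r}).ncard = C.ncard + 1 := by
    rw [Set.union_singleton, Set.ncard_insert_of_notMem hrC (Set.toFinite C)]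
  have hEmono : ((eSet G C).ncard : ℝ) ≤ ((eSet G (C ∪ {r})).ncard : ℝ) := by
    exact_mod_cast Set.ncard_le_ncard (eSet_mono G Set.subset_union_left) (Set.toFinite _)
  have hgnn : 0 ≤ graphDensity G := by
    rw [graphDensity]; positivity
  have hEnn : (0 : ℝ) ≤ ((eSet G C).ncard : ℝ) := by positivity
  have hD : graphDensity G < 2 * ((eSet G C).ncard : ℝ) / C.ncard := by
    rw [← hsd C]; exact goal1
  have hD' : graphDensity G * C.ncard < 2 * ((eSet G C).ncard : ℝ) :=
    (lt_div_iff₀ hnpos).mp hD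
  rw [hsd (C ∪ {r}), hins, gt_iff_lt]
  push_cast
  rw [div_lt_div_iff₀ two_pos (by linarith : (0:ℝ) < (C.ncard : ℝ) + 1)]
  nlinarith [hD', hEmono, hEnn, hn1, hgnn]
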